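/- With the same setup, the Gauss map ν : Σ → Sⁿ ⊂ ℝ^{n+1}, viewed as an ℝ^{n+1}-valued function on Σ, satisfies the vector-valued identity Δ_F ν + tr(A_F S²) ν + ∇H_F = 0, where ∇H_F is the tangential gradient of the anisotropic mean curvature. -/

import Mathlib

/-! By the Weingarten equation the anisotropic gradient of `⟨ν, w⟩` is `-Σ_j s_{ij} ⟨e_j, w⟩`, and
differentiating once more with the Gauss formula gives
`Δ_F ⟨ν, w⟩ = -Σ_j (Σ_i s_{ij;i}) ⟨e_j, w⟩ - tr(A_F S²) ⟨ν, w⟩`.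
It remains to see that `div S_F = ∇H_F`: expanding `s_{ij;i}` and `s_{ii;j}` by the product rule,
the `h`-derivative terms agree by Codazzi, and the `A_F`-derivative terms
`-Σ A_{il,p} h_{pi} h_{lj}` and `-Σ A_{il,p} h_{pj} h_{li}` agree by the symmetry of `A_{ij,k}`. -/

open Finset MeasureTheory

noncomputable section

/-- Kronecker delta. -/
def kron {n : ℕ} (i j : Fin n) : ℝ := if i = j then 1 else 0

/-- Covariant derivative of a 1-tensor `T` in an orthonormal frame `{e_i}` with
directional derivatives `D i = e_i` and connection coefficients
`Γ k i j = ω_{ki}(e_j)`: `T_{i;j} = e_j(T_i) + Σ_k T_k ω_{ki}(e_j)`. -/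
def cov1 {n : ℕ} {S : Type} (D : Fin n → (S → ℝ) → S → ℝ)
    (Γ : Fin n → Fin n → Fin n → S → ℝ) (T : Fin n → S → ℝ)
    (i j : Fin n) (s : S) : ℝ :=
  D j (T i) s + ∑ k, T k s * Γ k i j s

/-- Covariant derivative of a 2-tensor. -/
def cov2 {n : ℕ} {S : Type} (D : Fin n → (S → ℝ) → S → ℝ)
    (Γ : Fin n → Fin n → Fin n → S → ℝ) (T : Fin n → Fin n → S → ℝ)
    (i j k : Fin n) (s : S) : ℝ :=
  D k (T i j) s + (∑ l, T l j s * Γ l i k s) + ∑ l, T i l s * Γ l j k s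

/-- The anisotropic Laplacian `Δ_F f = div(A_F ∇ f)` in frame components. -/
def lapF {n : ℕ} {S : Type} (D : Fin n → (S → ℝ) → S → ℝ)
    (Γ : Fin n → Fin n → Fin n → S → ℝ) (Aν : Fin n → Fin n → S → ℝ)
    (f : S → ℝ) (s : S) : ℝ :=
  ∑ i, cov1 D Γ (fun k t => ∑ l, Aν k l t * D l f t) i i s

/-- Components `s_{ij} = Σ_l (A_{il}∘ν) h_{lj}` of the anisotropic Weingarten
operator `S_F = A_F ∘ S`. -/
def sF {n : ℕ} {S : Type} (Aν h : Fin n → Fin n → S → ℝ)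
    (i j : Fin n) (s : S) : ℝ :=
  ∑ l, Aν i l s * h l j s

/-- The anisotropic mean curvature `H_F = tr S_F`. -/
def HF {n : ℕ} {S : Type} (Aν h : Fin n → Fin n → S → ℝ) (s : S) : ℝ :=
  ∑ i, sF Aν h i i s

/-- `tr(S_F²) = Σ_{i,j} s_{ij} s_{ji}`. -/
def trSF2 {n : ℕ} {S : Type} (Aν h : Fin n → Fin n → S → ℝ) (s : S) : ℝ :=
  ∑ i, ∑ j, sF Aν h i j s * sF Aν h j i s

/-- `tr(A_F S²) = Σ_{i,j,k} (A_{ik}∘ν) h_{kj} h_{ji}`. -/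
def trAFS2 {n : ℕ} {S : Type} (Aν h : Fin n → Fin n → S → ℝ) (s : S) : ℝ :=
  ∑ i, ∑ j, sF Aν h i j s * h j i s

section FrameCalculus

variable {n : ℕ} {S : Type} {D : Fin n → (S → ℝ) → S → ℝ}
  {Γ : Fin n → Fin n → Fin n → S → ℝ}

theorem D_sum (hDadd : ∀ i (f g : S → ℝ) s, D i (fun t => f t + g t) s = D i f s + D i g s)
    (i : Fin n) {ι : Type*} (A : Finset ι) (f : ι → S → ℝ) (s : S) :
    D i (fun t => ∑ j ∈ A, f j t) s = ∑ j ∈ A, D i (f j) s := by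
  simpa only [Finset.sum_fn, AddMonoidHom.mk'_apply] using
    map_sum (AddMonoidHom.mk' (fun f => D i f s) fun f g => hDadd i f g s) f A

theorem D_neg (hDadd : ∀ i (f g : S → ℝ) s, D i (fun t => f t + g t) s = D i f s + D i g s)
    (i : Fin n) (f : S → ℝ) (s : S) : D i (fun t => -f t) s = -D i f s :=
  map_neg (AddMonoidHom.mk' (fun f => D i f s) fun f g => hDadd i f g s) f

theorem cov1_neg (hDadd : ∀ i (f g : S → ℝ) s, D i (fun t => f t + g t) s = D i f s + D i g s)
    (T : Fin n → S → ℝ) (i j : Fin n) (s : S) :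
    cov1 D Γ (fun k t => -T k t) i j s = -cov1 D Γ T i j s := by
  simp only [cov1, D_neg hDadd, neg_mul, sum_neg_distrib, neg_add]

theorem sum_mul_D_eq_neg_sum_sF {f : S → ℝ} {E : Fin n → S → ℝ} {h : Fin n → Fin n → S → ℝ}
    (hf : ∀ l s, D l f s = -∑ j, h l j s * E j s) (A : Fin n → Fin n → S → ℝ) (i : Fin n)
    (s : S) : ∑ l, A i l s * D l f s = -∑ j, sF A h i j s * E j s := by
  simp only [hf, sF, mul_neg, sum_neg_distrib, mul_sum, sum_mul, mul_assoc]
  rw [sum_comm]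

theorem cov1_sum_mul_frame
    (hDadd : ∀ i (f g : S → ℝ) s, D i (fun t => f t + g t) s = D i f s + D i g s)
    (hDmul : ∀ i (f g : S → ℝ) s, D i (fun t => f t * g t) s = D i f s * g s + f s * D i g s)
    {E : Fin n → S → ℝ} {N : S → ℝ} {h : Fin n → Fin n → S → ℝ}
    (hE : ∀ i j s, D j (E i) s = (∑ k, Γ i k j s * E k s) + h i j s * N s)
    (B : Fin n → Fin n → S → ℝ) (i k : Fin n) (s : S) :
    cov1 D Γ (fun i t => ∑ j, B i j t * E j t) i k s
      = ∑ j, cov2 D Γ B i j k s * E j s + (∑ j, B i j s * h j k s) * N s := by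
  simp only [cov1, cov2, D_sum hDadd, hDmul, hE, mul_add, add_mul, sum_add_distrib, mul_sum,
    sum_mul]
  have hΓB : ∑ j, ∑ m, B i j s * (Γ j m k s * E m s)
      = ∑ j, ∑ m, B i m s * Γ m j k s * E j s := by
    rw [sum_comm]
    simp only [mul_assoc]
  have hBΓ : ∑ m, ∑ j, B m j s * E j s * Γ m i k s
      = ∑ j, ∑ m, B m j s * Γ m i k s * E j s := by
    rw [sum_comm]
    simp only [mul_right_comm]
  rw [hΓB, hBΓ]
  simp only [mul_assoc]
  ring

theorem cov2_sF
    (hDadd : ∀ i (f g : S → ℝ) s, D i (fun t => f t + g t) s = D i f s + D i g s)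
    (hDmul : ∀ i (f g : S → ℝ) s, D i (fun t => f t * g t) s = D i f s * g s + f s * D i g s)
    (hΓ : ∀ i j k s, Γ i j k s = -Γ j i k s) (A h : Fin n → Fin n → S → ℝ) (i j k : Fin n)
    (s : S) :
    cov2 D Γ (sF A h) i j k s
      = ∑ l, cov2 D Γ A i l k s * h l j s + ∑ l, A i l s * cov2 D Γ h l j k s := by
  have hD : D k (sF A h i j) s = ∑ l, (D k (A i l) s * h l j s + A i l s * D k (h l j) s) :=
    (D_sum hDadd k univ _ s).trans (sum_congr rfl fun l _ => hDmul k (A i l) (h l j) s)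
  have hAΓ : ∑ l, ∑ m, A l m s * h m j s * Γ l i k s
      = ∑ l, ∑ m, A m l s * Γ m i k s * h l j s := by
    rw [sum_comm]
    simp only [mul_right_comm]
  have hhΓ : ∑ l, ∑ m, A i m s * h m l s * Γ l j k s
      = ∑ l, ∑ m, A i l s * (h l m s * Γ m j k s) := by
    rw [sum_comm]
    simp only [mul_assoc]
  have hcancel : ∑ l, ∑ m, A i l s * (h m j s * Γ m l k s)
      = -∑ l, ∑ m, A i m s * Γ m l k s * h l j s := by
    simp only [← sum_neg_distrib]
    rw [sum_comm]
    refine sum_congr rfl fun l _ => sum_congr rfl fun m _ => ?_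
    rw [hΓ]
    ring
  simp only [cov2, sF, hD, add_mul, mul_add, sum_add_distrib, sum_mul, mul_sum, hAΓ, hhΓ, hcancel]
  ring

theorem D_sum_diag_eq_sum_cov2
    (hDadd : ∀ i (f g : S → ℝ) s, D i (fun t => f t + g t) s = D i f s + D i g s)
    (hΓ : ∀ i j k s, Γ i j k s = -Γ j i k s) (T : Fin n → Fin n → S → ℝ) (k : Fin n) (s : S) :
    D k (fun t => ∑ i, T i i t) s = ∑ i, cov2 D Γ T i i k s := by
  have hcancel : ∑ i, ∑ l, T i l s * Γ l i k s = -∑ i, ∑ l, T l i s * Γ l i k s := by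
    simp only [← sum_neg_distrib]
    rw [sum_comm]
    refine sum_congr rfl fun i _ => sum_congr rfl fun l _ => ?_
    rw [hΓ]
    ring
  simp only [cov2, D_sum hDadd, sum_add_distrib, hcancel]
  ring

theorem sum_cov2_sF_eq_D_HF
    (hDadd : ∀ i (f g : S → ℝ) s, D i (fun t => f t + g t) s = D i f s + D i g s)
    (hDmul : ∀ i (f g : S → ℝ) s, D i (fun t => f t * g t) s = D i f s * g s + f s * D i g s)
    (hΓ : ∀ i j k s, Γ i j k s = -Γ j i k s) {A h : Fin n → Fin n → S → ℝ}
    (hCodazzi : ∀ i j k s, cov2 D Γ h i j k s = cov2 D Γ h i k j s)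
    {AAA : Fin n → Fin n → Fin n → S → ℝ} (hAAAsymm : ∀ i j k s, AAA i j k s = AAA i k j s)
    (hA : ∀ i j k s, cov2 D Γ A i j k s = -∑ p, AAA i j p s * h p k s) (j : Fin n) (s : S) :
    ∑ i, cov2 D Γ (sF A h) i j i s = D j (fun t => HF A h t) s := by
  have hAterm : ∑ i, ∑ l, cov2 D Γ A i l i s * h l j s
      = ∑ i, ∑ l, cov2 D Γ A i l j s * h l i s := by
    simp only [hA, neg_mul, sum_neg_distrib, sum_mul, neg_inj]
    refine sum_congr rfl fun i _ => ?_
    rw [sum_comm]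
    refine sum_congr rfl fun l _ => sum_congr rfl fun p _ => ?_
    rw [hAAAsymm i p l]
    ring
  simp only [HF, D_sum_diag_eq_sum_cov2 hDadd hΓ, cov2_sF hDadd hDmul hΓ, sum_add_distrib,
    hAterm, hCodazzi _ j]

theorem lapF_eq_of_weingarten
    (hDadd : ∀ i (f g : S → ℝ) s, D i (fun t => f t + g t) s = D i f s + D i g s)
    (hDmul : ∀ i (f g : S → ℝ) s, D i (fun t => f t * g t) s = D i f s * g s + f s * D i g s)
    {f N : S → ℝ} {E : Fin n → S → ℝ} {A h : Fin n → Fin n → S → ℝ}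
    (hf : ∀ l s, D l f s = -∑ j, h l j s * E j s)
    (hE : ∀ i j s, D j (E i) s = (∑ k, Γ i k j s * E k s) + h i j s * N s) (s : S) :
    lapF D Γ A f s = -∑ j, (∑ i, cov2 D Γ (sF A h) i j i s) * E j s - trAFS2 A h s * N s := by
  have hgrad : (fun k t => ∑ l, A k l t * D l f t) = fun k t => -∑ j, sF A h k j t * E j t :=
    funext₂ (sum_mul_D_eq_neg_sum_sF hf A)
  have hswap : ∑ j, (∑ i, cov2 D Γ (sF A h) i j i s) * E j s
      = ∑ i, ∑ j, cov2 D Γ (sF A h) i j i s * E j s := by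
    simp only [sum_mul]
    exact sum_comm
  simp only [lapF, hgrad, cov1_neg hDadd, cov1_sum_mul_frame hDadd hDmul hE, trAFS2,
    sum_neg_distrib, sum_add_distrib]
  rw [hswap, sum_mul]
  ring

end FrameCalculus

theorem stmt_9_general (n : ℕ) (S : Type)
    (D : Fin n → (S → ℝ) → S → ℝ)
    (Γ : Fin n → Fin n → Fin n → S → ℝ)
    -- metric compatibility: `ω_{ij} = -ω_{ji}`
    (hΓ : ∀ i j k s, Γ i j k s = -Γ j i k s)
    -- `D i` is a derivation (linearity and Leibniz rule)
    (hDadd : ∀ i (f g : S → ℝ) s, D i (fun t => f t + g t) s = D i f s + D i g s)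
    (hDmul : ∀ i (f g : S → ℝ) s,
      D i (fun t => f t * g t) s = D i f s * g s + f s * D i g s)
    (h : Fin n → Fin n → S → ℝ)
    -- Codazzi equation `h_{ijk} = h_{ikj}`
    (hCodazzi : ∀ i j k s, cov2 D Γ h i j k s = cov2 D Γ h i k j s)
    (Aν : Fin n → Fin n → S → ℝ)
    (AAA : Fin n → Fin n → Fin n → S → ℝ)
    -- `A_{ij,k}` is totally symmetric
    (hAAAsymm : ∀ i j k s, AAA i j k s = AAA j i k s ∧ AAA i j k s = AAA i k j s)
    -- `(A_{ij}∘ν)_k = -Σ_p (A_{ij,p}∘ν) h_{pk}`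
    (hAν : ∀ i j k s, cov2 D Γ Aν i j k s = -∑ p, AAA i j p s * h p k s)
    (ν : S → EuclideanSpace ℝ (Fin (n + 1)))
    (e : Fin n → S → EuclideanSpace ℝ (Fin (n + 1)))
    -- Weingarten equation `dν(e_i) = -Σ_j h_{ij} e_j`
    (hν : ∀ i (w : EuclideanSpace ℝ (Fin (n + 1))) s,
      D i (fun t => (inner ℝ (ν t) w : ℝ)) s = -∑ j, h i j s * (inner ℝ (e j s) w : ℝ))
    -- Gauss formula `de_i(e_j) = Σ_k ω_{ik}(e_j) e_k + h_{ij} ν`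
    (he : ∀ i j (w : EuclideanSpace ℝ (Fin (n + 1))) s,
      D j (fun t => (inner ℝ (e i t) w : ℝ)) s =
        (∑ k, Γ i k j s * (inner ℝ (e k s) w : ℝ)) + h i j s * (inner ℝ (ν s) w : ℝ))
    :
    ∀ (w : EuclideanSpace ℝ (Fin (n + 1))) s,
      lapF D Γ Aν (fun t => (inner ℝ (ν t) w : ℝ)) s +
        trAFS2 Aν h s * (inner ℝ (ν s) w : ℝ) +
        (∑ j, D j (fun t => HF Aν h t) s * (inner ℝ (e j s) w : ℝ)) = 0 := by
  intro w s
  rw [lapF_eq_of_weingarten hDadd hDmul (hν · w) (he · · w) s]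
  simp only [sum_cov2_sF_eq_D_HF hDadd hDmul hΓ hCodazzi (fun i j k s => (hAAAsymm i j k s).2)
    hAν]
  ring

/-- The Gauss map, viewed as an `ℝ^{n+1}`-valued function, satisfies
`Δ_F ν + tr(A_F S²) ν + ∇H_F = 0` (stated componentwise against any `w`). -/
theorem stmt_9 (n : ℕ) (S : Type)
    (D : Fin n → (S → ℝ) → S → ℝ)
    (Γ : Fin n → Fin n → Fin n → S → ℝ)
    -- metric compatibility: `ω_{ij} = -ω_{ji}`
    (hΓ : ∀ i j k s, Γ i j k s = -Γ j i k s)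
    -- `D i` is a derivation (linearity and Leibniz rule)
    (hDadd : ∀ i (f g : S → ℝ) s, D i (fun t => f t + g t) s = D i f s + D i g s)
    (hDmul : ∀ i (f g : S → ℝ) s,
      D i (fun t => f t * g t) s = D i f s * g s + f s * D i g s)
    (h : Fin n → Fin n → S → ℝ)
    (hsymm : ∀ i j s, h i j s = h j i s)
    -- Codazzi equation `h_{ijk} = h_{ikj}`
    (hCodazzi : ∀ i j k s, cov2 D Γ h i j k s = cov2 D Γ h i k j s)
    (Fν : S → ℝ) (Fiν : Fin n → S → ℝ)
    (Aν : Fin n → Fin n → S → ℝ) (hAsymm : ∀ i j s, Aν i j s = Aν j i s)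
    (AAA : Fin n → Fin n → Fin n → S → ℝ)
    -- `A_{ij,k}` is totally symmetric
    (hAAAsymm : ∀ i j k s, AAA i j k s = AAA j i k s ∧ AAA i j k s = AAA i k j s)
    -- `(F∘ν)_i = -Σ_j h_{ij} (F_j∘ν)`
    (hFν : ∀ i s, D i Fν s = -∑ j, h i j s * Fiν j s)
    -- `(F_i∘ν)_j = -Σ_k h_{jk} (F_{ik}∘ν)`, with `F_{ik} = A_{ik} - F δ_{ik}`
    (hFiν : ∀ i j s, cov1 D Γ Fiν i j s =
      -∑ k, h j k s * (Aν i k s - Fν s * kron i k))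
    -- `(A_{ij}∘ν)_k = -Σ_p (A_{ij,p}∘ν) h_{pk}`
    (hAν : ∀ i j k s, cov2 D Γ Aν i j k s = -∑ p, AAA i j p s * h p k s)
    (x ν : S → EuclideanSpace ℝ (Fin (n + 1)))
    (e : Fin n → S → EuclideanSpace ℝ (Fin (n + 1)))
    (horth : ∀ i j s, (inner ℝ (e i s) (e j s) : ℝ) = kron i j)
    (hνunit : ∀ s, (inner ℝ (ν s) (ν s) : ℝ) = 1)
    (hνtan : ∀ i s, (inner ℝ (e i s) (ν s) : ℝ) = 0)
    -- `dx(e_i) = e_i`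
    (hx : ∀ i (w : EuclideanSpace ℝ (Fin (n + 1))) s,
      D i (fun t => (inner ℝ (x t) w : ℝ)) s = inner ℝ (e i s) w)
    -- Weingarten equation `dν(e_i) = -Σ_j h_{ij} e_j`
    (hν : ∀ i (w : EuclideanSpace ℝ (Fin (n + 1))) s,
      D i (fun t => (inner ℝ (ν t) w : ℝ)) s = -∑ j, h i j s * (inner ℝ (e j s) w : ℝ))
    -- Gauss formula `de_i(e_j) = Σ_k ω_{ik}(e_j) e_k + h_{ij} ν`
    (he : ∀ i j (w : EuclideanSpace ℝ (Fin (n + 1))) s,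
      D j (fun t => (inner ℝ (e i t) w : ℝ)) s =
        (∑ k, Γ i k j s * (inner ℝ (e k s) w : ℝ)) + h i j s * (inner ℝ (ν s) w : ℝ))
    :
    ∀ (w : EuclideanSpace ℝ (Fin (n + 1))) s,
      lapF D Γ Aν (fun t => (inner ℝ (ν t) w : ℝ)) s +
        trAFS2 Aν h s * (inner ℝ (ν s) w : ℝ) +
        (∑ j, D j (fun t => HF Aν h t) s * (inner ℝ (e j s) w : ℝ)) = 0 :=
  stmt_9_general n S D Γ hΓ hDadd hDmul h hCodazzi Aν AAA hAAAsymm hAν ν e hν he
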